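/- Let N be a finite nonempty player set, 0 < c < p reals, and for each nonempty S ⊆ N let 0 ≤ a_S < b_S be reals; set α = (p−c)/p, q*_S = a_S + (b_S − a_S)·(p−c)/p, and let ν_S = U_α[p·a_S − c·q*_S, (p−c)·q*_S] be the distribution of the coalition profit. Let r : N → ℝ with r_i ≥ 0 for all i and r(N) = 1. Then for every nonempty S ⊆ N, the pushforward of ν_N under the map z ↦ r(S)·z second-order stochastically dominates ν_S if and only if r(S)·(a_N·p − (b_N − a_N)·c) ≥ a_S·p − (b_S − a_S)·c and r(S)·(a_N·(p+c) + b_N·(p−c)) ≥ a_S·(p+c) + b_S·(p−c). -/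

import Mathlib

open MeasureTheory ProbabilityTheory
open scoped NNReal ENNReal

/-- `P` second-order stochastically dominates `Q`. -/
def SSD (P Q : Measure ℝ) : Prop :=
  ∀ u : ℝ, (∫ z in Set.Iic u, (cdf P z - cdf Q z)) ≤ 0

/-- The uniform probability measure on the interval `[a, b]`. -/
noncomputable def unif (a b : ℝ) : Measure ℝ :=
  (ENNReal.ofReal (b - a))⁻¹ • (volume.restrict (Set.Icc a b))

/-- The `α`-cut uniform measure `U_α[a, b] = α·Unif[a,b] + (1−α)·δ_b`. -/
noncomputable def alphaCutUnif (α a b : ℝ) : Measure ℝ :=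
  ENNReal.ofReal α • unif a b + ENNReal.ofReal (1 - α) • Measure.dirac b

/-!
Every law involved has an explicit cdf `alphaCutCdf`: the profit laws are α-cut uniform, scaling
by `r(S) ≥ 0` keeps them α-cut uniform, and for `r(S) = 0` the scaled law is `δ₀`, whose cdf is
the degenerate case `a = b`. Second-order dominance is thus a comparison of the explicit
integrated cdfs `alphaCutCdfIntegral`, which are `0` left of the support, quadratic on it and
`u - mean` right of it. Testing at the lower end of the dominated law and at `u → ∞` shows that
the dominating law needs the larger minimum and the larger mean; since the two cdfs cross only
once, these two conditions are also sufficient. For the newsvendor profits the minimum is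
`α (a_S p − (b_S − a_S) c)` and the mean is `α/2 (a_S (p + c) + b_S (p − c))`.
-/

open Set

noncomputable def alphaCutCdf (α a b z : ℝ) : ℝ :=
  if z < a then 0 else if z < b then α * (z - a) / (b - a) else 1

noncomputable def alphaCutMean (α a b : ℝ) : ℝ := b - α * (b - a) / 2

noncomputable def alphaCutCdfIntegral (α a b u : ℝ) : ℝ :=
  if u ≤ a then 0
  else if u ≤ b then α * (u - a) ^ 2 / (2 * (b - a))
  else u - alphaCutMean α a b

section Comparison

variable {α a b a' b' u : ℝ}

lemma alphaCutCdfIntegral_nonneg (hα : 0 ≤ α) (hab : a ≤ b) :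
    0 ≤ alphaCutCdfIntegral α a b u := by
  unfold alphaCutCdfIntegral alphaCutMean
  split_ifs with hua hub
  · rfl
  · exact div_nonneg (by positivity) (by linarith)
  · nlinarith

lemma alphaCutCdfIntegral_pos (hα : 0 < α) (hab : a ≤ b) (hu : a < u) :
    0 < alphaCutCdfIntegral α a b u := by
  unfold alphaCutCdfIntegral alphaCutMean
  rw [if_neg (not_le.2 hu)]
  split_ifs with hub
  · exact div_pos (mul_pos hα (pow_pos (sub_pos.2 hu) 2)) (by linarith)
  · nlinarith

lemma alphaCutCdfIntegral_of_lt (hab : a ≤ b) (hu : b < u) :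
    alphaCutCdfIntegral α a b u = u - alphaCutMean α a b := by
  rw [alphaCutCdfIntegral, if_neg (by linarith), if_neg (not_le.2 hu)]

lemma sub_alphaCutMean_le_alphaCutCdfIntegral (hα : α ≤ 1) (hab : a ≤ b) :
    u - alphaCutMean α a b ≤ alphaCutCdfIntegral α a b u := by
  unfold alphaCutCdfIntegral alphaCutMean
  split_ifs with hua hub
  · nlinarith
  · rw [le_div_iff₀ (by linarith)]
    nlinarith [mul_nonneg (sub_nonneg.2 hub)
      (by nlinarith : 0 ≤ 2 * (b - a) - α * (b - a + (u - a)))]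
  · rfl

lemma sq_div_le_alphaCutCdfIntegral (hα₀ : 0 ≤ α) (hα₁ : α ≤ 1) (haa' : a ≤ a')
    (hm : alphaCutMean α a b ≤ alphaCutMean α a' b') (hu : a' < u) (hub' : u ≤ b') :
    α * (u - a') ^ 2 / (2 * (b' - a')) ≤ alphaCutCdfIntegral α a b u := by
  unfold alphaCutCdfIntegral alphaCutMean at *
  have hw' : 0 < b' - a' := by linarith
  have hs : 0 ≤ u - a' := by linarith
  rw [if_neg (by linarith)]
  split_ifs with hub
  · rw [div_le_div_iff₀ (by linarith) (by linarith)]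
    rcases le_or_gt (b - a) (b' - a') with hw | hw
    · gcongr ?_ * ?_ ^ 2 * (2 * ?_) <;> linarith
    · have hshift : b - a - (b' - a') ≤ 2 * (a' - a) := by nlinarith
      -- with `s = u - a'`, `d = a' - a`, `δ = (b - a) - (b' - a')`:
      -- `s² δ ≤ s (b' - a') δ ≤ 2 s d (b' - a') ≤ (2 s d + d²) (b' - a')`
      nlinarith [mul_nonneg (mul_nonneg (sub_nonneg.2 (by linarith : u - a' ≤ b' - a')) hs)
          (by linarith : (0 : ℝ) ≤ b - a - (b' - a')),
        mul_nonneg (mul_nonneg hs hw'.le) (sub_nonneg.2 hshift),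
        mul_nonneg (sq_nonneg (a' - a)) hw'.le]
  · rw [div_le_iff₀ (by linarith)]
    nlinarith [mul_nonneg (mul_nonneg hα₀ hs) (by linarith : (0 : ℝ) ≤ b' - a' - (u - a')),
      mul_nonneg hw'.le (by nlinarith : (0 : ℝ) ≤ (2 - α) * (u - b) + α * (a' - a))]

lemma alphaCutCdfIntegral_le_of_le_of_mean_le (hα₀ : 0 ≤ α) (hα₁ : α ≤ 1) (hab : a ≤ b)
    (haa' : a ≤ a') (hm : alphaCutMean α a b ≤ alphaCutMean α a' b') (u : ℝ) :
    alphaCutCdfIntegral α a' b' u ≤ alphaCutCdfIntegral α a b u := by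
  rw [alphaCutCdfIntegral]
  split_ifs with hua' hub'
  · exact alphaCutCdfIntegral_nonneg hα₀ hab
  · exact sq_div_le_alphaCutCdfIntegral hα₀ hα₁ haa' hm (not_le.1 hua') hub'
  · linarith [sub_alphaCutMean_le_alphaCutCdfIntegral (u := u) hα₁ hab]

theorem alphaCutCdfIntegral_le_iff (hα₀ : 0 < α) (hα₁ : α ≤ 1) (hab : a ≤ b) (hab' : a' ≤ b') :
    (∀ u, alphaCutCdfIntegral α a' b' u ≤ alphaCutCdfIntegral α a b u) ↔
      a ≤ a' ∧ alphaCutMean α a b ≤ alphaCutMean α a' b' := by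
  refine ⟨fun h ↦ ⟨?_, ?_⟩,
    fun h ↦ alphaCutCdfIntegral_le_of_le_of_mean_le hα₀.le hα₁ hab h.1 h.2⟩
  · by_contra! ha
    have hle := h a
    rw [show alphaCutCdfIntegral α a b a = 0 from if_pos le_rfl] at hle
    exact hle.not_gt (alphaCutCdfIntegral_pos hα₀ hab' ha)
  · have hle := h (max b b' + 1)
    rw [alphaCutCdfIntegral_of_lt hab' (by linarith [le_max_right b b']),
      alphaCutCdfIntegral_of_lt hab (by linarith [le_max_left b b'])] at hle
    linarith

end Comparison

section Integral

variable {α a b u : ℝ}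

lemma measurable_alphaCutCdf : Measurable (alphaCutCdf α a b) :=
  Measurable.ite measurableSet_Iio measurable_const <|
    Measurable.ite measurableSet_Iio (by fun_prop) measurable_const

lemma alphaCutCdf_mem_Icc (hα₀ : 0 ≤ α) (hα₁ : α ≤ 1) (z : ℝ) :
    alphaCutCdf α a b z ∈ Icc 0 1 := by
  unfold alphaCutCdf
  split_ifs with hza hzb
  · simp
  · have hz : 0 ≤ z - a := by linarith
    have hba : 0 < b - a := by linarith
    exact ⟨by positivity, (div_le_one hba).2 (by nlinarith)⟩
  · simp

lemma integrableOn_Iic_alphaCutCdf (hα₀ : 0 ≤ α) (hα₁ : α ≤ 1) (u : ℝ) :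
    IntegrableOn (alphaCutCdf α a b) (Iic u) := by
  have hzero : IntegrableOn (alphaCutCdf α a b) (Iio a) :=
    integrableOn_zero.congr_fun (fun z hz ↦ (if_pos hz).symm) measurableSet_Iio
  have hbdd : IntegrableOn (alphaCutCdf α a b) (Icc a u) :=
    Measure.integrableOn_of_bounded (M := 1) (by simp)
      measurable_alphaCutCdf.aestronglyMeasurable (ae_of_all _ fun z ↦ by
        obtain ⟨h₀, h₁⟩ := alphaCutCdf_mem_Icc (a := a) (b := b) hα₀ hα₁ z
        rwa [Real.norm_eq_abs, abs_of_nonneg h₀])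
  refine (hzero.union hbdd).mono_set fun z hz ↦ ?_
  rcases lt_or_ge z a with hza | hza
  · exact Or.inl hza
  · exact Or.inr ⟨hza, hz⟩

lemma intervalIntegral_alphaCutCdf_of_le (hau : a ≤ u) (hub : u ≤ b) :
    ∫ z in a..u, alphaCutCdf α a b z = α * (u - a) ^ 2 / (2 * (b - a)) := by
  rw [intervalIntegral.integral_congr_uIoo (g := fun z ↦ α / (b - a) * (z - a)) fun z hz ↦ by
      rw [uIoo_of_le hau] at hz
      rw [alphaCutCdf, if_neg (not_lt.2 hz.1.le), if_pos (hz.2.trans_le hub)]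
      ring,
    intervalIntegral.integral_const_mul, intervalIntegral.integral_comp_sub_right (fun x ↦ x),
    integral_id]
  field_simp
  ring

lemma intervalIntegral_alphaCutCdf_of_lt (hα₀ : 0 ≤ α) (hα₁ : α ≤ 1) (hab : a ≤ b)
    (hbu : b < u) : ∫ z in a..u, alphaCutCdf α a b z = α * (b - a) / 2 + (u - b) := by
  have hint (s t : ℝ) : IntervalIntegrable (alphaCutCdf α a b) volume s t :=
    ((integrableOn_Iic_alphaCutCdf hα₀ hα₁ (max s t)).mono_set fun _ hz ↦ hz.2).intervalIntegrable
  rw [← intervalIntegral.integral_add_adjacent_intervals (hint a b) (hint b u),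
    intervalIntegral_alphaCutCdf_of_le hab le_rfl,
    intervalIntegral.integral_congr_uIoo (g := fun _ ↦ 1) fun z hz ↦ by
      rw [uIoo_of_le hbu.le] at hz
      rw [alphaCutCdf, if_neg (by linarith [hz.1]), if_neg (not_lt.2 hz.1.le)],
    intervalIntegral.integral_const, smul_eq_mul, mul_one]
  rcases hab.eq_or_lt with rfl | hab
  · simp
  · field_simp

theorem setIntegral_Iic_alphaCutCdf (hα₀ : 0 ≤ α) (hα₁ : α ≤ 1) (hab : a ≤ b) (u : ℝ) :
    ∫ z in Iic u, alphaCutCdf α a b z = alphaCutCdfIntegral α a b u := by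
  have hzero (v : ℝ) (hv : v ≤ a) : ∫ z in Iic v, alphaCutCdf α a b z = 0 := by
    rw [integral_Iic_eq_integral_Iio, ← integral_zero ℝ ℝ]
    exact setIntegral_congr_fun measurableSet_Iio fun z (hz : z < v) ↦ if_pos (hz.trans_le hv)
  have hsplit (hau : a ≤ u) :
      ∫ z in Iic u, alphaCutCdf α a b z = ∫ z in a..u, alphaCutCdf α a b z := by
    rw [← intervalIntegral.integral_Iic_sub_Iic (integrableOn_Iic_alphaCutCdf hα₀ hα₁ a)
      (integrableOn_Iic_alphaCutCdf hα₀ hα₁ u), hzero a le_rfl, sub_zero]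
  rw [alphaCutCdfIntegral]
  split_ifs with hua hub
  · exact hzero u hua
  · rw [hsplit (not_le.1 hua).le, intervalIntegral_alphaCutCdf_of_le (not_le.1 hua).le hub]
  · rw [hsplit (by linarith), intervalIntegral_alphaCutCdf_of_lt hα₀ hα₁ hab (not_le.1 hub),
      alphaCutMean]
    ring

end Integral

section Cdf

variable {α a b : ℝ}

lemma unif_Iic (hab : a < b) (z : ℝ) :
    unif a b (Iic z) = ENNReal.ofReal ((min z b - a) / (b - a)) := by
  have hinter : Iic z ∩ Icc a b = Icc a (min z b) := by
    ext x
    simp only [mem_inter_iff, mem_Iic, mem_Icc, le_min_iff]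
    tauto
  rw [unif, Measure.smul_apply, Measure.restrict_apply measurableSet_Iic, hinter,
    Real.volume_Icc, smul_eq_mul, ← ENNReal.ofReal_inv_of_pos (by linarith),
    ← ENNReal.ofReal_mul (by have := sub_pos.2 hab; positivity), div_eq_inv_mul]

lemma alphaCutUnif_Iic (hα₀ : 0 ≤ α) (hα₁ : α ≤ 1) (hab : a < b) (z : ℝ) :
    alphaCutUnif α a b (Iic z) = ENNReal.ofReal (alphaCutCdf α a b z) := by
  rw [alphaCutUnif, Measure.add_apply, Measure.smul_apply, Measure.smul_apply, unif_Iic hab,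
    Measure.dirac_apply' _ measurableSet_Iic, smul_eq_mul, smul_eq_mul,
    ← ENNReal.ofReal_mul hα₀, alphaCutCdf]
  have hba : 0 < b - a := by linarith
  split_ifs with hza hzb
  · rw [indicator_of_notMem (by simp only [mem_Iic]; linarith), ENNReal.ofReal_eq_zero.2,
      ENNReal.ofReal_zero, mul_zero, zero_add]
    exact mul_nonpos_of_nonneg_of_nonpos hα₀
      (div_nonpos_of_nonpos_of_nonneg (by simp [hza.le]) hba.le)
  · rw [indicator_of_notMem (by simpa using hzb), min_eq_left hzb.le, mul_zero, add_zero,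
      mul_div_assoc]
  · rw [indicator_of_mem (by simpa using hzb), min_eq_right (not_lt.1 hzb), div_self hba.ne',
      mul_one, Pi.one_apply, mul_one, ← ENNReal.ofReal_add hα₀ (by linarith), add_sub_cancel]

lemma isProbabilityMeasure_alphaCutUnif (hα₀ : 0 ≤ α) (hα₁ : α ≤ 1) (hab : a < b) :
    IsProbabilityMeasure (alphaCutUnif α a b) := by
  constructor
  rw [alphaCutUnif, Measure.add_apply, Measure.smul_apply, Measure.smul_apply,
    measure_univ (μ := Measure.dirac b), unif, Measure.smul_apply, Measure.restrict_apply_univ,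
    Real.volume_Icc, smul_eq_mul, smul_eq_mul, smul_eq_mul,
    ENNReal.inv_mul_cancel (by simpa using hab) ENNReal.ofReal_ne_top, mul_one, mul_one,
    ← ENNReal.ofReal_add hα₀ (by linarith), add_sub_cancel, ENNReal.ofReal_one]

lemma cdf_alphaCutUnif (hα₀ : 0 ≤ α) (hα₁ : α ≤ 1) (hab : a < b) (z : ℝ) :
    cdf (alphaCutUnif α a b) z = alphaCutCdf α a b z := by
  have := isProbabilityMeasure_alphaCutUnif hα₀ hα₁ hab
  rw [cdf_eq_real, measureReal_def, alphaCutUnif_Iic hα₀ hα₁ hab,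
    ENNReal.toReal_ofReal (alphaCutCdf_mem_Icc hα₀ hα₁ z).1]

lemma cdf_dirac (x z : ℝ) : cdf (Measure.dirac x) z = if z < x then 0 else 1 := by
  rw [cdf_eq_real, measureReal_def, Measure.dirac_apply' _ measurableSet_Iic]
  split_ifs with hzx
  · rw [indicator_of_notMem (show x ∉ Iic z from not_le.2 hzx)]
    rfl
  · rw [indicator_of_mem (show x ∈ Iic z from not_lt.1 hzx)]
    rfl

lemma cdf_map_const_mul {μ : Measure ℝ} [IsProbabilityMeasure μ] {ρ : ℝ} (hρ : 0 < ρ)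
    (z : ℝ) : cdf (μ.map (ρ * ·)) z = cdf μ (z / ρ) := by
  have hmeas : Measurable (ρ * · : ℝ → ℝ) := measurable_const_mul ρ
  have := Measure.isProbabilityMeasure_map (μ := μ) hmeas.aemeasurable
  rw [cdf_eq_real, cdf_eq_real, measureReal_def, measureReal_def,
    Measure.map_apply hmeas measurableSet_Iic, preimage_const_mul_Iic₀ z hρ]

lemma alphaCutCdf_div {ρ : ℝ} (hρ : 0 < ρ) (z : ℝ) :
    alphaCutCdf α a b (z / ρ) = alphaCutCdf α (ρ * a) (ρ * b) z := by
  simp only [alphaCutCdf, div_lt_iff₀' hρ]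
  congr 2
  field_simp

theorem cdf_map_const_mul_alphaCutUnif (hα₀ : 0 ≤ α) (hα₁ : α ≤ 1) (hab : a < b) {ρ : ℝ}
    (hρ : 0 ≤ ρ) (z : ℝ) :
    cdf ((alphaCutUnif α a b).map (ρ * ·)) z = alphaCutCdf α (ρ * a) (ρ * b) z := by
  have := isProbabilityMeasure_alphaCutUnif hα₀ hα₁ hab
  rcases hρ.eq_or_lt with rfl | hρ
  · simp only [zero_mul, Measure.map_const, measure_univ, one_smul, cdf_dirac]
    simp [alphaCutCdf]
  · rw [cdf_map_const_mul hρ, cdf_alphaCutUnif hα₀ hα₁ hab, alphaCutCdf_div hρ]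

end Cdf

lemma alphaCutMean_const_mul (α ρ a b : ℝ) :
    alphaCutMean α (ρ * a) (ρ * b) = ρ * alphaCutMean α a b := by
  unfold alphaCutMean
  ring

theorem ssd_map_const_mul_alphaCutUnif_iff {α a b a' b' ρ : ℝ} (hα₀ : 0 < α) (hα₁ : α ≤ 1)
    (hab : a < b) (hab' : a' < b') (hρ : 0 ≤ ρ) :
    SSD ((alphaCutUnif α a' b').map (ρ * ·)) (alphaCutUnif α a b) ↔
      a ≤ ρ * a' ∧ alphaCutMean α a b ≤ ρ * alphaCutMean α a' b' := by
  have hρab : ρ * a' ≤ ρ * b' := mul_le_mul_of_nonneg_left hab'.le hρ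
  have hcdf (u : ℝ) : (∫ z in Iic u, (cdf ((alphaCutUnif α a' b').map (ρ * ·)) z
      - cdf (alphaCutUnif α a b) z)) ≤ 0 ↔
      alphaCutCdfIntegral α (ρ * a') (ρ * b') u ≤ alphaCutCdfIntegral α a b u := by
    simp only [cdf_map_const_mul_alphaCutUnif hα₀.le hα₁ hab' hρ,
      cdf_alphaCutUnif hα₀.le hα₁ hab]
    rw [integral_sub (integrableOn_Iic_alphaCutCdf hα₀.le hα₁ u)
        (integrableOn_Iic_alphaCutCdf hα₀.le hα₁ u),
      setIntegral_Iic_alphaCutCdf hα₀.le hα₁ hρab, setIntegral_Iic_alphaCutCdf hα₀.le hα₁ hab.le,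
      sub_nonpos]
  rw [SSD, forall_congr' hcdf, alphaCutCdfIntegral_le_iff hα₀ hα₁ hab.le hρab,
    alphaCutMean_const_mul]

section Newsvendor

variable {p c a b : ℝ}

lemma newsvendor_profit_min (hp : p ≠ 0) :
    p * a - c * (a + (b - a) * (p - c) / p) = (p - c) / p * (a * p - (b - a) * c) := by
  field_simp
  ring

lemma newsvendor_profit_min_lt_max (hp : p ≠ 0) (hcp : c < p) (hab : a < b) :
    p * a - c * (a + (b - a) * (p - c) / p) < (p - c) * (a + (b - a) * (p - c) / p) := by
  have hwidth : (p - c) * (a + (b - a) * (p - c) / p) - (p * a - c * (a + (b - a) * (p - c) / p))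
      = (b - a) * (p - c) := by
    field_simp
    ring
  nlinarith [mul_pos (sub_pos.2 hab) (sub_pos.2 hcp)]

lemma alphaCutMean_newsvendor_profit (hp : p ≠ 0) :
    alphaCutMean ((p - c) / p) (p * a - c * (a + (b - a) * (p - c) / p))
      ((p - c) * (a + (b - a) * (p - c) / p)) = (p - c) / p / 2 * (a * (p + c) + b * (p - c)) := by
  unfold alphaCutMean
  field_simp
  ring

end Newsvendor

theorem ssd_core_newsvendors_iff_general {N : Type*} [Fintype N] [Nonempty N]
    (c p : ℝ) (hc : 0 < c) (hcp : c < p)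
    (a b : Finset N → ℝ)
    (hab : ∀ S : Finset N, S.Nonempty → a S < b S)
    (qStar : Finset N → ℝ)
    (hq : ∀ S : Finset N, S.Nonempty → qStar S = a S + (b S - a S) * (p - c) / p)
    (ν : Finset N → Measure ℝ)
    (hν : ∀ S : Finset N, S.Nonempty →
      ν S = alphaCutUnif ((p - c) / p) (p * a S - c * qStar S) ((p - c) * qStar S))
    (r : N → ℝ) (hr : ∀ i, 0 ≤ r i) :
    ∀ S : Finset N, S.Nonempty →
      (SSD ((ν Finset.univ).map (fun z => (∑ i ∈ S, r i) * z)) (ν S) ↔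
        (a S * p - (b S - a S) * c ≤
            (∑ i ∈ S, r i) * (a Finset.univ * p - (b Finset.univ - a Finset.univ) * c)) ∧
          (a S * (p + c) + b S * (p - c) ≤
            (∑ i ∈ S, r i) * (a Finset.univ * (p + c) + b Finset.univ * (p - c)))) := by
  intro S hS
  have hp : p ≠ 0 := (hc.trans hcp).ne'
  have hα₀ : 0 < (p - c) / p := div_pos (by linarith) (by linarith)
  have hα₁ : (p - c) / p ≤ 1 := (div_le_one (by linarith)).2 (by linarith)
  have hN := Finset.univ_nonempty (α := N)
  rw [hν S hS, hν _ hN, hq S hS, hq _ hN,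
    ssd_map_const_mul_alphaCutUnif_iff hα₀ hα₁ (newsvendor_profit_min_lt_max hp hcp (hab S hS))
      (newsvendor_profit_min_lt_max hp hcp (hab _ hN)) (Finset.sum_nonneg fun i _ ↦ hr i),
    alphaCutMean_newsvendor_profit hp, alphaCutMean_newsvendor_profit hp,
    newsvendor_profit_min hp, newsvendor_profit_min hp, mul_left_comm (∑ i ∈ S, r i),
    mul_le_mul_iff_right₀ hα₀, mul_left_comm (∑ i ∈ S, r i), mul_le_mul_iff_right₀ (half_pos hα₀)]

/-- In the stochastic multiple newsvendors game with uniformly distributed demands, a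
stochastic payoff without transfer payments SSD-dominates the profit of coalition `S` iff
`r(S)·(a_N·p − (b_N − a_N)·c) ≥ a_S·p − (b_S − a_S)·c` and
`r(S)·(a_N·(p+c) + b_N·(p−c)) ≥ a_S·(p+c) + b_S·(p−c)`. -/
theorem ssd_core_newsvendors_iff {N : Type*} [Fintype N] [DecidableEq N] [Nonempty N]
    (c p : ℝ) (hc : 0 < c) (hcp : c < p)
    (a b : Finset N → ℝ)
    (ha : ∀ S : Finset N, S.Nonempty → 0 ≤ a S)
    (hab : ∀ S : Finset N, S.Nonempty → a S < b S)
    (qStar : Finset N → ℝ)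
    (hq : ∀ S : Finset N, S.Nonempty → qStar S = a S + (b S - a S) * (p - c) / p)
    (ν : Finset N → Measure ℝ)
    (hν : ∀ S : Finset N, S.Nonempty →
      ν S = alphaCutUnif ((p - c) / p) (p * a S - c * qStar S) ((p - c) * qStar S))
    (r : N → ℝ) (hr : ∀ i, 0 ≤ r i) (hrN : ∑ i : N, r i = 1) :
    ∀ S : Finset N, S.Nonempty →
      (SSD ((ν Finset.univ).map (fun z => (∑ i ∈ S, r i) * z)) (ν S) ↔
        (a S * p - (b S - a S) * c ≤
            (∑ i ∈ S, r i) * (a Finset.univ * p - (b Finset.univ - a Finset.univ) * c)) ∧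
          (a S * (p + c) + b S * (p - c) ≤
            (∑ i ∈ S, r i) * (a Finset.univ * (p + c) + b Finset.univ * (p - c)))) :=
  ssd_core_newsvendors_iff_general c p hc hcp a b hab qStar hq ν hν r hr
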